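/- Let n₁ and n₂ be distinct primes, let k > 1 be a natural number with gcd(n₁, k) = gcd(n₂, k) = 1, and suppose n = n₁·n₂ is a pseudoprime of basis k. Then for all natural numbers q ≥ 1 and p ≥ 1 and all integers r and s such that r·n₁^q + s·n₂^p - (r + s) > 0, n divides k^(r·n₁^q + s·n₂^p - (r + s)) - 1 (as integers). -/
import Mathlib

/-- `n` is a pseudoprime of basis `k`: an odd composite number, relatively prime
to `k`, with `n ∣ k^(n-1) - 1`. -/
def IsPseudoprime (k n : ℕ) : Prop :=
  Odd n ∧ 1 < n ∧ ¬ n.Prime ∧ Nat.gcd k n = 1 ∧ (n : ℤ) ∣ (k : ℤ) ^ (n - 1) - 1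

lemma dvd_pow_sub_one_iff (N k e : ℕ) :
    (N : ℤ) ∣ (k : ℤ) ^ e - 1 ↔ (k : ZMod N) ^ e = 1 := by
  rw [← ZMod.intCast_zmod_eq_zero_iff_dvd]
  push_cast
  rw [sub_eq_zero]

lemma aux_key (n₁ n₂ k : ℕ) (h₂ : n₂.Prime) (hg₂ : Nat.gcd n₂ k = 1)
    (hdvd : ((n₁ * n₂ : ℕ) : ℤ) ∣ (k : ℤ) ^ (n₁ * n₂ - 1) - 1) :
    (n₂ : ℤ) ∣ (k : ℤ) ^ (n₁ - 1) - 1 := by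
  rcases Nat.eq_zero_or_pos n₁ with h1 | h1
  · simp [h1]
  have hc : Nat.Coprime k n₂ := (Nat.coprime_comm).mp hg₂
  haveI : Fact n₂.Prime := ⟨h₂⟩
  set u : (ZMod n₂)ˣ := ZMod.unitOfCoprime k hc with hu
  have hcu : ((u : ZMod n₂)) = (k : ZMod n₂) := ZMod.coe_unitOfCoprime k hc
  have hcard : orderOf u ∣ n₂ - 1 := by
    have := orderOf_dvd_card (x := u)
    rwa [ZMod.card_units_eq_totient, Nat.totient_prime h₂] at this
  have hdvd₂ : (n₂ : ℤ) ∣ (k : ℤ) ^ (n₁ * n₂ - 1) - 1 := by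
    refine dvd_trans ?_ hdvd
    exact_mod_cast Int.natCast_dvd_natCast.mpr (dvd_mul_left n₂ n₁)
  have h3 : orderOf u ∣ n₁ * n₂ - 1 := by
    rw [orderOf_dvd_iff_pow_eq_one]
    ext
    rw [Units.val_pow_eq_pow_val, hcu, Units.val_one]
    exact (dvd_pow_sub_one_iff _ _ _).mp hdvd₂
  have harith : n₁ * n₂ - 1 - n₁ * (n₂ - 1) = n₁ - 1 := by
    obtain ⟨m, rfl⟩ : ∃ m, n₂ = m + 1 := ⟨n₂ - 1, by have := h₂.one_lt; omega⟩
    simp only [Nat.add_sub_cancel]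
    have hm : n₁ * (m + 1) = n₁ * m + n₁ := Nat.mul_succ _ _
    omega
  have hord : orderOf u ∣ n₁ - 1 := by
    rw [← harith]
    exact Nat.dvd_sub h3 (Dvd.dvd.mul_left hcard n₁)
  have := orderOf_dvd_iff_pow_eq_one.mp hord
  rw [dvd_pow_sub_one_iff]
  have := congrArg Units.val this
  rwa [Units.val_pow_eq_pow_val, hcu, Units.val_one] at this

lemma fermat_int (p k : ℕ) (hp : p.Prime) (hg : Nat.gcd p k = 1) :
    (p : ℤ) ∣ (k : ℤ) ^ (p - 1) - 1 := by
  haveI : Fact p.Prime := ⟨hp⟩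
  rw [dvd_pow_sub_one_iff]
  apply ZMod.pow_card_sub_one_eq_one
  rw [Ne, ZMod.natCast_eq_zero_iff]
  intro hdvd
  rw [Nat.gcd_eq_left hdvd] at hg
  exact hp.ne_one hg

theorem pseudoprime_dvd_pow_lin_comb_pows_sub_one (n₁ n₂ k : ℕ)
    (h₁ : n₁.Prime) (h₂ : n₂.Prime) (hne : n₁ ≠ n₂) (hk : 1 < k)
    (hg₁ : Nat.gcd n₁ k = 1) (hg₂ : Nat.gcd n₂ k = 1)
    (hps : IsPseudoprime k (n₁ * n₂)) :
    ∀ q p : ℕ, 1 ≤ q → 1 ≤ p → ∀ r s : ℤ,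
      0 < r * (n₁ : ℤ) ^ q + s * (n₂ : ℤ) ^ p - (r + s) →
      ((n₁ * n₂ : ℕ) : ℤ) ∣
        (k : ℤ) ^ (r * (n₁ : ℤ) ^ q + s * (n₂ : ℤ) ^ p - (r + s)).natAbs - 1 := by
  obtain ⟨-, -, -, hgk, hd⟩ := hps
  have hcop : IsCoprime (n₁ : ℤ) (n₂ : ℤ) :=
    Int.isCoprime_iff_gcd_eq_one.mpr (by
      exact_mod_cast (Nat.coprime_primes h₁ h₂).mpr hne)
  have key₂ : (n₂ : ℤ) ∣ (k : ℤ) ^ (n₁ - 1) - 1 := aux_key n₁ n₂ k h₂ hg₂ hd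
  have hd2 : ((n₂ * n₁ : ℕ) : ℤ) ∣ (k : ℤ) ^ (n₂ * n₁ - 1) - 1 := by
    rw [Nat.mul_comm n₂ n₁]; exact hd
  have key₁ : (n₁ : ℤ) ∣ (k : ℤ) ^ (n₂ - 1) - 1 := aux_key n₂ n₁ k h₁ hg₁ hd2
  have hn1 : ((n₁ * n₂ : ℕ) : ℤ) ∣ (k : ℤ) ^ (n₁ - 1) - 1 := by
    push_cast
    exact hcop.mul_dvd (fermat_int n₁ k h₁ hg₁) key₂
  have hn2 : ((n₁ * n₂ : ℕ) : ℤ) ∣ (k : ℤ) ^ (n₂ - 1) - 1 := by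
    push_cast
    exact hcop.mul_dvd key₁ (fermat_int n₂ k h₂ hg₂)
  have hck : Nat.Coprime k (n₁ * n₂) := hgk
  set u : (ZMod (n₁ * n₂))ˣ := ZMod.unitOfCoprime k hck with hu
  have hcu : ((u : ZMod (n₁ * n₂))) = (k : ZMod (n₁ * n₂)) := ZMod.coe_unitOfCoprime k hck
  have ho : ∀ m : ℕ, ((n₁ * n₂ : ℕ) : ℤ) ∣ (k : ℤ) ^ m - 1 → orderOf u ∣ m := by
    intro m hm
    rw [orderOf_dvd_iff_pow_eq_one]
    ext
    rw [Units.val_pow_eq_pow_val, hcu, Units.val_one]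
    exact (dvd_pow_sub_one_iff _ _ _).mp hm
  have ho1 : orderOf u ∣ n₁ - 1 := ho _ hn1
  have ho2 : orderOf u ∣ n₂ - 1 := ho _ hn2
  intro q p hq hp r s hpos
  set E : ℤ := r * (n₁ : ℤ) ^ q + s * (n₂ : ℤ) ^ p - (r + s) with hE
  have hE' : E = r * ((n₁ : ℤ) ^ q - 1) + s * ((n₂ : ℤ) ^ p - 1) := by ring
  have hcast : ∀ (n : ℕ) (j : ℕ), n.Prime → orderOf u ∣ n - 1 →
      (orderOf u : ℤ) ∣ (n : ℤ) ^ j - 1 := by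
    intro n j hn hdvd
    have h1 : (orderOf u : ℤ) ∣ (n : ℤ) - 1 := by
      have := Int.natCast_dvd_natCast.mpr hdvd
      rwa [Nat.cast_sub hn.one_le, Nat.cast_one] at this
    refine h1.trans ?_
    have := sub_dvd_pow_sub_pow (n : ℤ) 1 j
    simpa using this
  have hdE : (orderOf u : ℤ) ∣ E := by
    rw [hE']
    exact dvd_add ((hcast n₁ q h₁ ho1).mul_left r) ((hcast n₂ p h₂ ho2).mul_left s)
  have hzE : u ^ E = 1 := orderOf_dvd_iff_zpow_eq_one.mp hdE
  have hnat : u ^ E.natAbs = 1 := by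
    rw [← zpow_natCast, Int.natAbs_of_nonneg hpos.le]
    exact hzE
  rw [dvd_pow_sub_one_iff]
  have := congrArg Units.val hnat
  rwa [Units.val_pow_eq_pow_val, hcu, Units.val_one] at this
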